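/- Let n be a finite-dimensional nilpotent Lie algebra over k and V a U(n)-module such that every vector of V is n-torsion (V = ∪_m V^{n^m}) and the subspace V^n of vectors killed by n is finite-dimensional. Then for every m ≥ 1, the subspace V^{n^m} = {v ∈ V : n^m v = 0} is finite-dimensional. -/

import Mathlib

/-!
The action map `v ↦ (x ↦ x • v)` sends `V^{n^(m+1)}` into `Hom_k(n, V^{n^m})`, and its kernel is
`V^n`; hence `dim V^{n^(m+1)} ≤ dim V^n + dim n · dim V^{n^m}`, and induction on `m` concludes.
-/

open UniversalEnvelopingAlgebra

attribute [local instance 100] LieRing.ofAssociativeRing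

/-- The image of the Lie algebra `L` inside its universal enveloping algebra,
as a `k`-submodule (so that `(augSpan k L) ^ m` is the span of products of `m`
elements of `L`). -/
noncomputable def augSpan (k : Type) [Field k] (L : Type) [LieRing L] [LieAlgebra k L] :
    Submodule k (UniversalEnvelopingAlgebra k L) :=
  Submodule.span k (Set.range (ι k : L →ₗ⁅k⁆ UniversalEnvelopingAlgebra k L))

/-- `V^{n^m}`-style annihilator: the subspace of vectors killed by every element of
the given subspace `N` of `U(L)`. -/
noncomputable def annOf (k : Type) [Field k] (L : Type) [LieRing L] [LieAlgebra k L]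
    (V : Type) [AddCommGroup V] [Module (UniversalEnvelopingAlgebra k L) V]
    [Module k V] [IsScalarTower k (UniversalEnvelopingAlgebra k L) V]
    (N : Submodule k (UniversalEnvelopingAlgebra k L)) : Submodule k V where
  carrier := {v | ∀ x ∈ N, x • v = 0}
  add_mem' := by
    intro a b ha hb x hx
    rw [smul_add, ha x hx, hb x hx, add_zero]
  zero_mem' := by
    intro x hx
    simp
  smul_mem' := by
    intro c v hv x hx
    rw [← smul_comm c x v, hv x hx, smul_zero]

/-- `V^{n^m}` : the subspace of vectors killed by all products of `m` elements of `L`. -/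
noncomputable def annN (k : Type) [Field k] (L : Type) [LieRing L] [LieAlgebra k L]
    (V : Type) [AddCommGroup V] [Module (UniversalEnvelopingAlgebra k L) V]
    [Module k V] [IsScalarTower k (UniversalEnvelopingAlgebra k L) V] (m : ℕ) :
    Submodule k V :=
  annOf k L V ((augSpan k L) ^ m)

theorem Submodule.finiteDimensional_of_map_of_ker {k M N : Type*} [Field k]
    [AddCommGroup M] [Module k M] [AddCommGroup N] [Module k N]
    (A : Submodule k M) (f : M →ₗ[k] N) [FiniteDimensional k (A.map f)]
    [FiniteDimensional k (LinearMap.ker f)] : FiniteDimensional k A :=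
  Module.Finite.iff_fg.mpr <| Submodule.fg_of_fg_map_of_fg_inf_ker f
    (Module.Finite.iff_fg.mp inferInstance)
    (Module.Finite.iff_fg.mp (Submodule.finiteDimensional_of_le inf_le_right))

section Annihilators

variable {k : Type} [Field k] {L : Type} [LieRing L] [LieAlgebra k L]
  {V : Type} [AddCommGroup V] [Module (UniversalEnvelopingAlgebra k L) V]
  [Module k V] [IsScalarTower k (UniversalEnvelopingAlgebra k L) V]

theorem mem_annOf_span_iff {s : Set (UniversalEnvelopingAlgebra k L)} {v : V} :
    v ∈ annOf k L V (Submodule.span k s) ↔ ∀ x ∈ s, x • v = 0 := by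
  refine ⟨fun h x hx => h x (Submodule.subset_span hx), fun h x hx => ?_⟩
  induction hx using Submodule.span_induction with
  | mem x hx => exact h x hx
  | zero => exact zero_smul _ v
  | add x y _ _ hx hy => rw [add_smul, hx, hy, add_zero]
  | smul c x _ hx => rw [smul_assoc, hx, smul_zero]

theorem mem_annN_one_iff {v : V} : v ∈ annN k L V 1 ↔ ∀ x : L, ι k x • v = 0 := by
  rw [annN, pow_one, augSpan, mem_annOf_span_iff, Set.forall_mem_range]

theorem ι_smul_mem_annN_of_mem_annN_succ {m : ℕ} {v : V} (hv : v ∈ annN k L V (m + 1))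
    (x : L) : ι k x • v ∈ annN k L V m := fun y hy => by
  rw [← mul_smul]
  exact hv _ (pow_succ (augSpan k L) m ▸
    Submodule.mul_mem_mul hy (Submodule.subset_span ⟨x, rfl⟩))

variable (k L V)

noncomputable def actionMap : V →ₗ[k] L →ₗ[k] V :=
  LinearMap.mk₂ k (fun v x => ι k x • v)
    (fun _ _ _ => smul_add _ _ _)
    (fun c v x => (smul_comm c (ι k x) v).symm)
    (fun v x y => by rw [map_add, add_smul])
    (fun c v x => by rw [map_smul, smul_assoc])

theorem ker_actionMap : LinearMap.ker (actionMap k L V) = annN k L V 1 := by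
  ext v
  rw [LinearMap.mem_ker, mem_annN_one_iff, LinearMap.ext_iff]
  rfl

theorem map_actionMap_annN_succ_le (m : ℕ) :
    (annN k L V (m + 1)).map (actionMap k L V) ≤
      LinearMap.range (LinearMap.compRight k (annN k L V m).subtype) := by
  rintro _ ⟨v, hv, rfl⟩
  exact ⟨LinearMap.codRestrict _ (actionMap k L V v)
    (ι_smul_mem_annN_of_mem_annN_succ hv), LinearMap.subtype_comp_codRestrict _ _ _⟩

theorem finiteDimensional_annN_succ [FiniteDimensional k L] (m : ℕ)
    [FiniteDimensional k (annN k L V 1)] [FiniteDimensional k (annN k L V m)] :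
    FiniteDimensional k (annN k L V (m + 1)) := by
  have : FiniteDimensional k ((annN k L V (m + 1)).map (actionMap k L V)) :=
    Submodule.finiteDimensional_of_le (map_actionMap_annN_succ_le k L V m)
  have : FiniteDimensional k (LinearMap.ker (actionMap k L V)) := by
    rwa [ker_actionMap]
  exact Submodule.finiteDimensional_of_map_of_ker _ (actionMap k L V)

end Annihilators

theorem stmt5_general (k : Type) [Field k]
    (L : Type) [LieRing L] [LieAlgebra k L] [FiniteDimensional k L]
    (V : Type) [AddCommGroup V] [Module (UniversalEnvelopingAlgebra k L) V]
    [Module k V] [IsScalarTower k (UniversalEnvelopingAlgebra k L) V]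
    (hfd : FiniteDimensional k (annN k L V 1)) :
    ∀ m : ℕ, 1 ≤ m → FiniteDimensional k (annN k L V m) := by
  intro m hm
  induction m, hm using Nat.le_induction with
  | base => exact hfd
  | succ m _ ih => exact finiteDimensional_annN_succ k L V m

theorem stmt5 (k : Type) [Field k] [CharZero k]
    (L : Type) [LieRing L] [LieAlgebra k L] [FiniteDimensional k L]
    [LieRing.IsNilpotent L]
    (V : Type) [AddCommGroup V] [Module (UniversalEnvelopingAlgebra k L) V]
    [Module k V] [IsScalarTower k (UniversalEnvelopingAlgebra k L) V]
    (htor : ∀ v : V, ∃ m : ℕ, v ∈ annN k L V m)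
    (hfd : FiniteDimensional k (annN k L V 1)) :
    ∀ m : ℕ, 1 ≤ m → FiniteDimensional k (annN k L V m) :=
  stmt5_general k L V hfd
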